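/- arXiv:1509.05306 — 3 statements merged into one kernel-verified Lean document; each statement's English description precedes it below -/
import Mathlib

section
/- Let 0 < a ≤ b be real numbers. For each i = 1, 2, …, n, let A_i be a Hermitian k×k complex matrix with a·I ≤ A_i ≤ b·I, and let w_i ≥ 0 be a real constant. Then (∑_{i=1}^n w_i A_i) ⊗_s (∑_{i=1}^n w_i A_i⁻¹) ≤ ((a² + b²)/(2ab)) · (∑_{i=1}^n w_i)² · I, where I is the k²×k² identity matrix. -/
/-!
For `a ≤ X, Y ≤ b` the matrix `Z = X ⊗ Y⁻¹` satisfies `a/b ≤ Z ≤ b/a` and `Z⁻¹ = X⁻¹ ⊗ Y`, so the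
scalar inequality `x + 1/x ≤ a/b + b/a` on `[a/b, b/a]`, applied through the continuous functional
calculus, gives `X ⊗ Y⁻¹ + X⁻¹ ⊗ Y ≤ a/b + b/a = (a² + b²)/(ab)`. For the weighted sums
`S = ∑ wᵢ Aᵢ` and `T = ∑ wᵢ Aᵢ⁻¹`, the matrix `S ⊗ T + T ⊗ S` expands into these pair terms
`Aᵢ ⊗ Aⱼ⁻¹ + Aᵢ⁻¹ ⊗ Aⱼ` with weights `wᵢ wⱼ`, whose total is `(∑ wᵢ)²`.
-/

open Matrix MeasureTheory
open scoped Kronecker ComplexOrder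

attribute [local instance] Matrix.frobeniusNormedAddCommGroup Matrix.frobeniusNormedSpace

/-- Symmetrized Kronecker tensor product: `X ⊗ₛ Y = (1/2)(X ⊗ Y + Y ⊗ X)`. -/
noncomputable def symKron {k : ℕ} (X Y : Matrix (Fin k) (Fin k) ℂ) :
    Matrix (Fin k × Fin k) (Fin k × Fin k) ℂ :=
  ((1 : ℂ) / 2) • (X ⊗ₖ Y + Y ⊗ₖ X)

open scoped MatrixOrder Ring

lemma continuousOn_inv_spectrum {A : Type*} [Ring A] [Algebra ℝ A] {a : A} (ha : IsUnit a) :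
    ContinuousOn (·⁻¹) (spectrum ℝ a) :=
  continuousOn_inv₀.mono fun _ hx h0 => spectrum.zero_notMem ℝ ha (h0 ▸ hx)

section FunctionalCalculus

variable {A : Type*} [Ring A] [StarRing A] [PartialOrder A] [StarOrderedRing A]
  [TopologicalSpace A] [Algebra ℝ A] [StarModule ℝ A]
  [ContinuousFunctionalCalculus ℝ A IsSelfAdjoint] [NonnegSpectrumClass ℝ A]
  {a : A} {t s : ℝ}

lemma spectrum_subset_Icc_of_le (hta : algebraMap ℝ A t ≤ a) (has : a ≤ algebraMap ℝ A s) :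
    spectrum ℝ a ⊆ Set.Icc t s := by
  have ha : IsSelfAdjoint a := .of_ge hta (.algebraMap A (.all t))
  rw [algebraMap_le_iff_le_spectrum] at hta
  rw [le_algebraMap_iff_spectrum_le] at has
  exact fun x hx => ⟨hta x hx, has x hx⟩

lemma isUnit_of_algebraMap_le (ht : 0 < t) (hta : algebraMap ℝ A t ≤ a) : IsUnit a := by
  have ha : IsSelfAdjoint a := .of_ge hta (.algebraMap A (.all t))
  rw [algebraMap_le_iff_le_spectrum] at hta
  exact spectrum.isUnit_of_zero_notMem ℝ fun h0 => (hta 0 h0).not_gt ht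

lemma ringInverse_nonneg_of_algebraMap_le (ht : 0 < t) (hta : algebraMap ℝ A t ≤ a) :
    0 ≤ a⁻¹ʳ := by
  have ha : IsSelfAdjoint a := .of_ge hta (.algebraMap A (.all t))
  have hunit := isUnit_of_algebraMap_le ht hta
  rw [← cfc_ringInverse_id (R := ℝ) a hunit]
  rw [algebraMap_le_iff_le_spectrum] at hta
  exact cfc_nonneg fun x hx => inv_nonneg.2 (ht.le.trans (hta x hx))

lemma algebraMap_inv_le_ringInverse (ht : 0 < t) (hta : algebraMap ℝ A t ≤ a)
    (has : a ≤ algebraMap ℝ A s) : algebraMap ℝ A s⁻¹ ≤ a⁻¹ʳ := by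
  have ha : IsSelfAdjoint a := .of_ge hta (.algebraMap A (.all t))
  have hunit := isUnit_of_algebraMap_le ht hta
  have hspec := spectrum_subset_Icc_of_le hta has
  rw [← cfc_ringInverse_id (R := ℝ) a hunit]
  exact algebraMap_le_cfc _ _ _ (fun x hx =>
    inv_anti₀ (ht.trans_le (hspec hx).1) (hspec hx).2) (continuousOn_inv_spectrum hunit)

lemma ringInverse_le_algebraMap_inv (ht : 0 < t) (hta : algebraMap ℝ A t ≤ a) :
    a⁻¹ʳ ≤ algebraMap ℝ A t⁻¹ := by
  have ha : IsSelfAdjoint a := .of_ge hta (.algebraMap A (.all t))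
  have hunit := isUnit_of_algebraMap_le ht hta
  rw [← cfc_ringInverse_id (R := ℝ) a hunit]
  rw [algebraMap_le_iff_le_spectrum] at hta
  exact cfc_le_algebraMap _ _ _ (fun x hx => inv_anti₀ ht (hta x hx))
    (continuousOn_inv_spectrum hunit)

lemma cfc_add_mul_inv (ht : 0 < t) (hta : algebraMap ℝ A t ≤ a) (c : ℝ) :
    cfc (fun x : ℝ => x + c * x⁻¹) a = a + c • a⁻¹ʳ := by
  have ha : IsSelfAdjoint a := .of_ge hta (.algebraMap A (.all t))
  have hunit := isUnit_of_algebraMap_le ht hta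
  have hinv := continuousOn_inv_spectrum hunit
  rw [cfc_add .., cfc_const_mul .., cfc_id' .., cfc_ringInverse_id a hunit]

/-- The operator Kantorovich inequality. -/
lemma add_smul_ringInverse_le (ht : 0 < t) (hta : algebraMap ℝ A t ≤ a)
    (has : a ≤ algebraMap ℝ A s) : a + (t * s) • a⁻¹ʳ ≤ algebraMap ℝ A (t + s) := by
  have ha : IsSelfAdjoint a := .of_ge hta (.algebraMap A (.all t))
  have hspec := spectrum_subset_Icc_of_le hta has
  have hinv := continuousOn_inv_spectrum (isUnit_of_algebraMap_le ht hta)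
  rw [← cfc_add_mul_inv ht hta]
  refine cfc_le_algebraMap _ _ _ (fun x hx => ?_)
  obtain ⟨htx, hxs⟩ := hspec hx
  have hx0 : 0 < x := ht.trans_le htx
  have hgap : t + s - (x + t * s * x⁻¹) = (x - t) * (s - x) / x := by field_simp; ring
  rw [← sub_nonneg, hgap]
  exact div_nonneg (mul_nonneg (sub_nonneg.2 htx) (sub_nonneg.2 hxs)) hx0.le

end FunctionalCalculus

lemma Finset.sum_sum_mul_smul_le {ι M : Type*} [AddCommMonoid M] [PartialOrder M]
    [IsOrderedAddMonoid M] [Module ℝ M] [PosSMulMono ℝ M] (s : Finset ι) {w : ι → ℝ}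
    (hw : ∀ i ∈ s, 0 ≤ w i) {F : ι → ι → M} {C : M} (hF : ∀ i ∈ s, ∀ j ∈ s, F i j ≤ C) :
    ∑ i ∈ s, ∑ j ∈ s, (w i * w j) • F i j ≤ (∑ i ∈ s, w i) ^ 2 • C := by
  rw [sq, Finset.sum_mul_sum, Finset.sum_smul]
  refine Finset.sum_le_sum fun i hi => ?_
  rw [Finset.sum_smul]
  exact Finset.sum_le_sum fun j hj =>
    smul_le_smul_of_nonneg_left (hF i hi j hj) (mul_nonneg (hw i hi) (hw j hj))

namespace Matrix

variable {l m n p : Type*}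

lemma sum_smul_kronecker_sum_smul {ι κ R α : Type*} [CommSemiring R] [Semiring α] [Algebra R α]
    (s : Finset ι) (t : Finset κ) (v : ι → R) (w : κ → R)
    (X : ι → Matrix l m α) (Y : κ → Matrix n p α) :
    (∑ i ∈ s, v i • X i) ⊗ₖ (∑ j ∈ t, w j • Y j) =
      ∑ i ∈ s, ∑ j ∈ t, (v i * w j) • (X i ⊗ₖ Y j) := by
  have hbil (A : Matrix l m α) (B : Matrix n p α) : A ⊗ₖ B = kroneckerBilinear (R := R) A B :=
    rfl
  simp only [hbil, map_sum, LinearMap.sum_apply, map_smul, LinearMap.smul_apply,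
    Finset.smul_sum, smul_smul]
  rw [Finset.sum_comm]
  simp only [mul_comm]

variable {𝕜 : Type*} [RCLike 𝕜]

lemma kronecker_le_kronecker [Finite m] [Finite n] {X₁ X₂ : Matrix m m 𝕜} {Y₁ Y₂ : Matrix n n 𝕜}
    (hX₁ : 0 ≤ X₁) (hX : X₁ ≤ X₂) (hY₁ : 0 ≤ Y₁) (hY : Y₁ ≤ Y₂) : X₁ ⊗ₖ Y₁ ≤ X₂ ⊗ₖ Y₂ := by
  have hsplit : X₂ ⊗ₖ Y₂ - X₁ ⊗ₖ Y₁ = (X₂ - X₁) ⊗ₖ Y₂ + X₁ ⊗ₖ (Y₂ - Y₁) := by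
    ext ⟨i, i'⟩ ⟨j, j'⟩; simp only [sub_apply, add_apply, kronecker_apply]; ring
  rw [le_iff, hsplit]
  exact ((le_iff.mp hX).kronecker (hY₁.trans hY).posSemidef).add
    (hX₁.posSemidef.kronecker (le_iff.mp hY))

variable [Fintype m] [DecidableEq m] [Fintype n] [DecidableEq n]

lemma algebraMap_kronecker_algebraMap (t u : ℝ) :
    algebraMap ℝ (Matrix m m 𝕜) t ⊗ₖ algebraMap ℝ (Matrix n n 𝕜) u =
      algebraMap ℝ (Matrix (m × n) (m × n) 𝕜) (t * u) := by
  simp only [Algebra.algebraMap_eq_smul_one, smul_kronecker, kronecker_smul, one_kronecker_one,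
    smul_smul, mul_comm]

lemma kronecker_inv_add_inv_kronecker_le {X Y : Matrix m m 𝕜} {a b : ℝ} (ha : 0 < a) (hab : a ≤ b)
    (hXa : algebraMap ℝ _ a ≤ X) (hXb : X ≤ algebraMap ℝ _ b)
    (hYa : algebraMap ℝ _ a ≤ Y) (hYb : Y ≤ algebraMap ℝ _ b) :
    X ⊗ₖ Y⁻¹ + X⁻¹ ⊗ₖ Y ≤ algebraMap ℝ _ (a / b + b / a) := by
  have hb : 0 < b := ha.trans_le hab
  have hYunit : IsUnit Y := isUnit_of_algebraMap_le ha hYa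
  have hYinv : Y⁻¹ = Y⁻¹ʳ := nonsing_inv_eq_ringInverse Y
  have hZa : algebraMap ℝ _ (a * b⁻¹) ≤ X ⊗ₖ Y⁻¹ := by
    rw [← algebraMap_kronecker_algebraMap, hYinv]
    exact kronecker_le_kronecker (algebraMap_nonneg _ ha.le) hXa
      (algebraMap_nonneg _ (inv_nonneg.2 hb.le)) (algebraMap_inv_le_ringInverse ha hYa hYb)
  have hZb : X ⊗ₖ Y⁻¹ ≤ algebraMap ℝ _ (b * a⁻¹) := by
    rw [← algebraMap_kronecker_algebraMap, hYinv]
    exact kronecker_le_kronecker ((algebraMap_nonneg _ ha.le).trans hXa) hXb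
      (ringInverse_nonneg_of_algebraMap_le ha hYa) (ringInverse_le_algebraMap_inv ha hYa)
  have hZinv : (X ⊗ₖ Y⁻¹)⁻¹ʳ = X⁻¹ ⊗ₖ Y := by
    rw [← nonsing_inv_eq_ringInverse, inv_kronecker,
      nonsing_inv_nonsing_inv _ (isUnit_iff_isUnit_det Y |>.mp hYunit)]
  have key := add_smul_ringInverse_le (mul_pos ha (inv_pos.2 hb)) hZa hZb
  rwa [hZinv, show a * b⁻¹ * (b * a⁻¹) = 1 by field_simp, one_smul, ← div_eq_mul_inv,
    ← div_eq_mul_inv] at key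

end Matrix

theorem kantorovich_sum_tensor_scalar_weight_general {k n : ℕ} (a b : ℝ) (ha : 0 < a) (hab : a ≤ b)
    (A : Fin n → Matrix (Fin k) (Fin k) ℂ)
    (hAa : ∀ i, (A i - a • 1).PosSemidef)
    (hAb : ∀ i, ((b • 1 : Matrix (Fin k) (Fin k) ℂ) - A i).PosSemidef)
    (w : Fin n → ℝ) (hw : ∀ i, 0 ≤ w i) :
    ((((a ^ 2 + b ^ 2) / (2 * a * b)) * (∑ i, w i) ^ 2) •
        (1 : Matrix (Fin k × Fin k) (Fin k × Fin k) ℂ)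
      - symKron (∑ i, w i • A i) (∑ i, w i • (A i)⁻¹)).PosSemidef := by
  set S := ∑ i, w i • A i
  set T := ∑ i, w i • (A i)⁻¹
  have hlow : ∀ i, algebraMap ℝ _ a ≤ A i := fun i => by
    rw [Algebra.algebraMap_eq_smul_one]; exact hAa i
  have hupp : ∀ i, A i ≤ algebraMap ℝ _ b := fun i => by
    rw [Algebra.algebraMap_eq_smul_one]; exact hAb i
  have hpair : ∀ i ∈ Finset.univ, ∀ j ∈ Finset.univ,
      A i ⊗ₖ (A j)⁻¹ + (A i)⁻¹ ⊗ₖ A j ≤ algebraMap ℝ _ (a / b + b / a) := fun i _ j _ =>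
    kronecker_inv_add_inv_kronecker_le ha hab (hlow i) (hupp i) (hlow j) (hupp j)
  have hexpand : S ⊗ₖ T + T ⊗ₖ S =
      ∑ i, ∑ j, (w i * w j) • (A i ⊗ₖ (A j)⁻¹ + (A i)⁻¹ ⊗ₖ A j) := by
    simp only [S, T, sum_smul_kronecker_sum_smul, smul_add, Finset.sum_add_distrib]
  have hsum := Finset.sum_sum_mul_smul_le Finset.univ (fun i _ => hw i) hpair
  rw [← hexpand] at hsum
  rw [← le_iff]
  calc symKron S T = (2⁻¹ : ℝ) • (S ⊗ₖ T + T ⊗ₖ S) := by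
        rw [symKron, ← Complex.coe_smul]; norm_num
    _ ≤ (2⁻¹ : ℝ) • ((∑ i, w i) ^ 2 • algebraMap ℝ _ (a / b + b / a)) :=
        smul_le_smul_of_nonneg_left hsum (by norm_num)
    _ = ((a ^ 2 + b ^ 2) / (2 * a * b) * (∑ i, w i) ^ 2) • 1 := by
        rw [Algebra.algebraMap_eq_smul_one, smul_smul, smul_smul]
        congr 1
        field_simp

/-- Corollary 3.5: discrete Kantorovich type inequality with scalar weights. -/
theorem kantorovich_sum_tensor_scalar_weight {k n : ℕ} (a b : ℝ) (ha : 0 < a) (hab : a ≤ b)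
    (A : Fin n → Matrix (Fin k) (Fin k) ℂ)
    (hAherm : ∀ i, (A i).IsHermitian)
    (hAa : ∀ i, (A i - a • 1).PosSemidef)
    (hAb : ∀ i, ((b • 1 : Matrix (Fin k) (Fin k) ℂ) - A i).PosSemidef)
    (w : Fin n → ℝ) (hw : ∀ i, 0 ≤ w i) :
    ((((a ^ 2 + b ^ 2) / (2 * a * b)) * (∑ i, w i) ^ 2) •
        (1 : Matrix (Fin k × Fin k) (Fin k × Fin k) ℂ)
      - symKron (∑ i, w i • A i) (∑ i, w i • (A i)⁻¹)).PosSemidef :=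
  kantorovich_sum_tensor_scalar_weight_general a b ha hab A hAa hAb w hw
end

section
/- Let 0 < a ≤ b be real numbers and let A_1, …, A_n be Hermitian k×k complex matrices with a·I ≤ A_i ≤ b·I for each i. Then ((1/n)(A_1 + ⋯ + A_n)) ⊗_s ((1/n)(A_1⁻¹ + ⋯ + A_n⁻¹)) ≤ ((a² + b²)/(2ab)) · I, where I is the k²×k² identity matrix. (This is a reverse of the weighted arithmetic–harmonic mean inequality.) -/
/-!
Expanding the two means, `2 n² (mean A ⊗ₛ mean A⁻¹)` is the sum over all pairs `(i, j)` of
`A i ⊗ (A j)⁻¹ + (A i)⁻¹ ⊗ A j`, so it suffices to show `a b (P ⊗ Q⁻¹ + P⁻¹ ⊗ Q) ≤ a² + b²`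
whenever `a ≤ P, Q ≤ b`. The commuting matrices `S = P ⊗ 1` and `T = 1 ⊗ Q` also lie between
`a` and `b`, and `(a² + b²) S T - a b (S² + T²) = (b T - a S) (b S - a T)` is a product of
commuting nonnegative matrices, hence nonnegative. Multiplying by `(P ⊗ Q)⁻¹ ≥ 0`, which commutes
with it, turns `S T` into `1` and `S² + T²` into `P ⊗ Q⁻¹ + P⁻¹ ⊗ Q`.
-/

open Matrix MeasureTheory
open scoped Kronecker ComplexOrder

attribute [local instance] Matrix.frobeniusNormedAddCommGroup Matrix.frobeniusNormedSpace

open scoped MatrixOrder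

section CommuteBounds

variable {A : Type*} [Ring A] [PartialOrder A] [StarRing A] [StarOrderedRing A]
  [TopologicalSpace A] [Algebra ℝ A] [StarModule ℝ A]
  [ContinuousFunctionalCalculus ℝ A IsSelfAdjoint] [NonnegSpectrumClass ℝ A]

theorem Commute.smul_sq_add_sq_le {S T : A} (hST : Commute S T) {a b : ℝ} (ha : 0 ≤ a)
    (hab : a ≤ b) (hSa : a • 1 ≤ S) (hSb : S ≤ b • 1) (hTa : a • 1 ≤ T) (hTb : T ≤ b • 1) :
    (a * b) • (S ^ 2 + T ^ 2) ≤ (a ^ 2 + b ^ 2) • (S * T) := by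
  have hb : 0 ≤ b := ha.trans hab
  have hbT_aS : 0 ≤ b • T - a • S := by
    have : b • T - a • S = b • (T - a • 1) + a • (b • 1 - S) := by module
    rw [this]
    exact add_nonneg (smul_nonneg hb (sub_nonneg.2 hTa)) (smul_nonneg ha (sub_nonneg.2 hSb))
  have hbS_aT : 0 ≤ b • S - a • T := by
    have : b • S - a • T = b • (S - a • 1) + a • (b • 1 - T) := by module
    rw [this]
    exact add_nonneg (smul_nonneg hb (sub_nonneg.2 hSa)) (smul_nonneg ha (sub_nonneg.2 hTb))
  have hcomm : Commute (b • T - a • S) (b • S - a • T) := by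
    apply_rules [Commute.sub_left, Commute.sub_right, Commute.smul_left, Commute.smul_right,
      Commute.refl, hST.symm]
  have key : (a ^ 2 + b ^ 2) • (S * T) - (a * b) • (S ^ 2 + T ^ 2)
      = (b • T - a • S) * (b • S - a • T) := by
    simp only [sub_mul, mul_sub, smul_mul_smul_comm, hST.symm.eq, sq]
    module
  exact sub_nonneg.1 (key ▸ hcomm.mul_nonneg hbT_aS hbS_aT)

end CommuteBounds

theorem Commute.kronecker {α m n : Type*} [CommSemiring α] [Fintype m] [Fintype n]
    {X X' : Matrix m m α} {Y Y' : Matrix n n α} (hX : Commute X X') (hY : Commute Y Y') :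
    Commute (X ⊗ₖ Y) (X' ⊗ₖ Y') := by
  simp only [Commute, SemiconjBy, ← mul_kronecker_mul, hX.eq, hY.eq]

namespace Matrix

theorem sum_kronecker_sum {α ι κ l m n p : Type*} [NonUnitalNonAssocSemiring α]
    (s : Finset ι) (t : Finset κ) (X : ι → Matrix l m α) (Y : κ → Matrix n p α) :
    (∑ i ∈ s, X i) ⊗ₖ (∑ j ∈ t, Y j) = ∑ i ∈ s, ∑ j ∈ t, X i ⊗ₖ Y j := by
  ext ⟨i₁, i₂⟩ ⟨j₁, j₂⟩
  simp [Matrix.sum_apply, Finset.sum_mul_sum]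

theorem commute_nonsing_inv_self {α m : Type*} [CommRing α] [Fintype m] [DecidableEq m]
    {P : Matrix m m α} (hP : IsUnit P.det) : Commute P⁻¹ P :=
  (P.nonsing_inv_mul hP).trans (P.mul_nonsing_inv hP).symm

variable {𝕜 m n : Type*} [RCLike 𝕜]

theorem posDef_of_smul_one_le [DecidableEq m] {P : Matrix m m 𝕜} {a : ℝ} (ha : 0 < a)
    (h : a • 1 ≤ P) : P.PosDef := by
  simpa using PosDef.posSemidef_add (le_iff.1 h) (PosDef.one.smul ha)

variable [Fintype m] [Fintype n]

theorem kronecker_le_kronecker_left {X Y : Matrix m m 𝕜} (h : X ≤ Y) {Z : Matrix n n 𝕜}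
    (hZ : 0 ≤ Z) : X ⊗ₖ Z ≤ Y ⊗ₖ Z :=
  calc X ⊗ₖ Z ≤ X ⊗ₖ Z + (Y - X) ⊗ₖ Z :=
        le_add_of_nonneg_right (nonneg_iff_posSemidef.2 (h.kronecker (nonneg_iff_posSemidef.1 hZ)))
    _ = Y ⊗ₖ Z := by rw [← add_kronecker, add_sub_cancel]

theorem kronecker_le_kronecker_right {X Y : Matrix n n 𝕜} (h : X ≤ Y) {Z : Matrix m m 𝕜}
    (hZ : 0 ≤ Z) : Z ⊗ₖ X ≤ Z ⊗ₖ Y :=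
  calc Z ⊗ₖ X ≤ Z ⊗ₖ X + Z ⊗ₖ (Y - X) :=
        le_add_of_nonneg_right (nonneg_iff_posSemidef.2 ((nonneg_iff_posSemidef.1 hZ).kronecker h))
    _ = Z ⊗ₖ Y := by rw [← kronecker_add, add_sub_cancel]

variable [DecidableEq m] [DecidableEq n]

theorem smul_kronecker_inv_add_inv_kronecker_le {P : Matrix m m 𝕜} {Q : Matrix n n 𝕜} {a b : ℝ}
    (ha : 0 < a) (hab : a ≤ b) (hPa : a • 1 ≤ P) (hPb : P ≤ b • 1) (hQa : a • 1 ≤ Q)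
    (hQb : Q ≤ b • 1) :
    (a * b) • (P ⊗ₖ Q⁻¹ + P⁻¹ ⊗ₖ Q) ≤ (a ^ 2 + b ^ 2) • 1 := by
  have hPpos := posDef_of_smul_one_le ha hPa
  have hQpos := posDef_of_smul_one_le ha hQa
  have hP : IsUnit P.det := hPpos.isUnit.map detMonoidHom
  have hQ : IsUnit Q.det := hQpos.isUnit.map detMonoidHom
  set S := P ⊗ₖ (1 : Matrix n n 𝕜)
  set T := (1 : Matrix m m 𝕜) ⊗ₖ Q
  set R := P⁻¹ ⊗ₖ Q⁻¹
  have hST : Commute S T := (Commute.one_right P).kronecker (Commute.one_left Q)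
  have hRS : Commute R S := (commute_nonsing_inv_self hP).kronecker (Commute.one_right _)
  have hRT : Commute R T := (Commute.one_right _).kronecker (commute_nonsing_inv_self hQ)
  have hR : 0 ≤ R :=
    nonneg_iff_posSemidef.2 (hPpos.posSemidef.inv.kronecker hQpos.posSemidef.inv)
  have h1m : (0 : Matrix m m 𝕜) ≤ 1 := zero_le_one
  have h1n : (0 : Matrix n n 𝕜) ≤ 1 := zero_le_one
  have key := hST.smul_sq_add_sq_le ha.le hab
    (by simpa [S, smul_kronecker] using kronecker_le_kronecker_left hPa h1n)
    (by simpa [S, smul_kronecker] using kronecker_le_kronecker_left hPb h1n)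
    (by simpa [T, kronecker_smul] using kronecker_le_kronecker_right hQa h1m)
    (by simpa [T, kronecker_smul] using kronecker_le_kronecker_right hQb h1m)
  have hRST : R * (S * T) = 1 := by
    simp only [R, S, T, ← mul_kronecker_mul, mul_one, one_mul, nonsing_inv_mul _ hP,
      nonsing_inv_mul _ hQ, one_kronecker_one]
  have hRS2 : R * S ^ 2 = P ⊗ₖ Q⁻¹ := by
    simp only [R, S, sq, ← mul_kronecker_mul, mul_one, nonsing_inv_mul_cancel_left _ _ hP]
  have hRT2 : R * T ^ 2 = P⁻¹ ⊗ₖ Q := by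
    simp only [R, T, sq, ← mul_kronecker_mul, mul_one, nonsing_inv_mul_cancel_left _ _ hQ]
  have hRdiff : Commute R ((a ^ 2 + b ^ 2) • (S * T) - (a * b) • (S ^ 2 + T ^ 2)) :=
    ((hRS.mul_right hRT).smul_right _).sub_right
      (((hRS.pow_right 2).add_right (hRT.pow_right 2)).smul_right _)
  have := hRdiff.mul_nonneg hR (sub_nonneg.2 key)
  rwa [mul_sub, mul_smul_comm, mul_smul_comm, mul_add, hRST, hRS2, hRT2, sub_nonneg] at this

theorem smul_sum_kronecker_sum_inv_add_le {ι : Type*} [Fintype ι] {A : ι → Matrix m m 𝕜}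
    {a b : ℝ} (ha : 0 < a) (hab : a ≤ b) (hAa : ∀ i, a • 1 ≤ A i) (hAb : ∀ i, A i ≤ b • 1) :
    (a * b) • ((∑ i, A i) ⊗ₖ (∑ i, (A i)⁻¹) + (∑ i, (A i)⁻¹) ⊗ₖ (∑ i, A i))
      ≤ ((Fintype.card ι : ℝ) ^ 2 * (a ^ 2 + b ^ 2)) • 1 := by
  rw [sum_kronecker_sum, sum_kronecker_sum, ← Finset.sum_add_distrib]
  simp_rw [← Finset.sum_add_distrib, Finset.smul_sum]
  calc ∑ i, ∑ j, (a * b) • (A i ⊗ₖ (A j)⁻¹ + (A i)⁻¹ ⊗ₖ A j)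
      ≤ ∑ _i : ι, ∑ _j : ι, (a ^ 2 + b ^ 2) • (1 : Matrix (m × m) (m × m) 𝕜) :=
        Finset.sum_le_sum fun i _ ↦ Finset.sum_le_sum fun j _ ↦
          smul_kronecker_inv_add_inv_kronecker_le ha hab (hAa i) (hAb i) (hAa j) (hAb j)
    _ = _ := by
        simp only [Finset.sum_const, Finset.card_univ, ← Nat.cast_smul_eq_nsmul ℝ, smul_smul]
        congr 1
        ring

end Matrix

theorem symKron_smul_smul {k : ℕ} (r : ℝ) (X Y : Matrix (Fin k) (Fin k) ℂ) :
    symKron (r • X) (r • Y) = (r ^ 2 / 2) • (X ⊗ₖ Y + Y ⊗ₖ X) := by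
  simp only [symKron, smul_kronecker, kronecker_smul]
  module

theorem reverse_am_hm_tensor_general {k n : ℕ} (a b : ℝ) (ha : 0 < a) (hab : a ≤ b)
    (A : Fin n → Matrix (Fin k) (Fin k) ℂ)
    (hAa : ∀ i, (A i - a • 1).PosSemidef)
    (hAb : ∀ i, ((b • 1 : Matrix (Fin k) (Fin k) ℂ) - A i).PosSemidef) :
    (((a ^ 2 + b ^ 2) / (2 * a * b)) • (1 : Matrix (Fin k × Fin k) (Fin k × Fin k) ℂ)
      - symKron ((1 / (n : ℝ)) • ∑ i, A i) ((1 / (n : ℝ)) • ∑ i, (A i)⁻¹)).PosSemidef := by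
  have hb : 0 < b := ha.trans_le hab
  rw [← Matrix.le_iff]
  rcases Nat.eq_zero_or_pos n with rfl | hn
  -- for `n = 0` both means are `0`: the sums are empty (and `1 / 0 = 0`)
  · simpa [symKron] using smul_nonneg (by positivity) zero_le_one
  have hsum := Matrix.smul_sum_kronecker_sum_inv_add_le ha hab hAa hAb
  rw [Fintype.card_fin] at hsum
  calc symKron ((1 / (n : ℝ)) • ∑ i, A i) ((1 / (n : ℝ)) • ∑ i, (A i)⁻¹)
      = (1 / (2 * n ^ 2 * (a * b))) • ((a * b) • ((∑ i, A i) ⊗ₖ (∑ i, (A i)⁻¹)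
          + (∑ i, (A i)⁻¹) ⊗ₖ (∑ i, A i))) := by
        rw [symKron_smul_smul, smul_smul]
        congr 1
        field_simp
    _ ≤ (1 / (2 * n ^ 2 * (a * b))) • (((n : ℝ) ^ 2 * (a ^ 2 + b ^ 2)) • 1) :=
        smul_le_smul_of_nonneg_left hsum (by positivity)
    _ = ((a ^ 2 + b ^ 2) / (2 * a * b)) • 1 := by
        rw [smul_smul]
        congr 1
        field_simp

/-- Reverse AM–HM inequality (inequality (3.7)): for Hermitian `A_i` with `a·I ≤ A_i ≤ b·I`,
`((1/n) ∑ A_i) ⊗ₛ ((1/n) ∑ A_i⁻¹) ≤ ((a²+b²)/(2ab))·I`. -/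
theorem reverse_am_hm_tensor {k n : ℕ} (a b : ℝ) (ha : 0 < a) (hab : a ≤ b)
    (A : Fin n → Matrix (Fin k) (Fin k) ℂ)
    (hAherm : ∀ i, (A i).IsHermitian)
    (hAa : ∀ i, (A i - a • 1).PosSemidef)
    (hAb : ∀ i, ((b • 1 : Matrix (Fin k) (Fin k) ℂ) - A i).PosSemidef) :
    (((a ^ 2 + b ^ 2) / (2 * a * b)) • (1 : Matrix (Fin k × Fin k) (Fin k × Fin k) ℂ)
      - symKron ((1 / (n : ℝ)) • ∑ i, A i) ((1 / (n : ℝ)) • ∑ i, (A i)⁻¹)).PosSemidef :=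
  reverse_am_hm_tensor_general a b ha hab A hAa hAb
end

section
/- Assume the field hypotheses (weights not needed). Let f be a continuous real-valued function defined on [a, b] ∪ [1/b, 1/a] such that f(x)·f(1/x) ≤ 1 for all x ∈ [a, b], with f([a, b]) ⊆ [a, b] or f([a, b]) ⊆ [1/b, 1/a], and let g : [a, b] → [0, ∞) be continuous. Then (∫_Ω f(A_t) g(A_t) dμ(t)) ⊗_s (∫_Ω f(A_t⁻¹) g(A_t) dμ(t)) ≤ ((a² + b²)/(2ab)) · (∫_Ω g(A_t) dμ(t))^{⊗2}, where f(A_t), f(A_t⁻¹) and g(A_t) are defined by the functional calculus for Hermitian matrices. -/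
open Matrix MeasureTheory
open scoped Kronecker ComplexOrder

attribute [local instance] Matrix.frobeniusNormedAddCommGroup Matrix.frobeniusNormedSpace

/-!
Write `K = (a² + b²) / (2ab)`, `F x = f x * g x` and `H x = f x⁻¹ * g x`. For `x, y ∈ [a, b]`
the scalar kernel `K g(x) g(y) - (F(x) H(y) + H(x) F(y)) / 2` is nonnegative: `f(1/y) ≤ 1 / f(y)`,
and `f` maps `[a, b]` into a dilate `s • [a, b]`, so `u = f(x) / f(y)` lies in `[a/b, b/a]` and the
bracket is at most `g(x) g(y) (u + 1/u) ≤ g(x) g(y) (a/b + b/a) = 2 K g(x) g(y)`.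

Diagonalising `A_s` and `A_t` by unitaries `U_s, U_t`, the matrix
`K g(A_s) ⊗ g(A_t) - (F(A_s) ⊗ H(A_t) + H(A_s) ⊗ F(A_t)) / 2` is `U_s ⊗ U_t` conjugating the
diagonal matrix of kernel values at pairs of eigenvalues, hence positive semidefinite. Integrating
over `s` and `t` gives the claim, since the Kronecker product is a continuous bilinear map and the
positive semidefinite cone is closed.
-/

open scoped MatrixOrder

section Scalar

theorem add_inv_le_add_inv_of_mem_Icc {r u : ℝ} (hr : 0 < r) (hu : u ∈ Set.Icc r r⁻¹) :
    u + u⁻¹ ≤ r + r⁻¹ := by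
  obtain ⟨hru, hur⟩ := hu
  have hu0 : 0 < u := hr.trans_le hru
  have h : u + u⁻¹ - (r + r⁻¹) = (u - r) * (u - r⁻¹) / u := by field_simp; ring
  have : (u - r) * (u - r⁻¹) / u ≤ 0 :=
    div_nonpos_of_nonpos_of_nonneg (mul_nonpos_of_nonneg_of_nonpos (by linarith) (by linarith))
      hu0.le
  linarith

theorem div_add_div_le_of_mem_Icc {a b s x y : ℝ} (ha : 0 < a) (hs : 0 < s)
    (hx : x ∈ Set.Icc (s * a) (s * b)) (hy : y ∈ Set.Icc (s * a) (s * b)) :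
    x / y + y / x ≤ a / b + b / a := by
  have hy0 : 0 < y := by nlinarith [hy.1]
  have hx0 : 0 < x := by nlinarith [hx.1]
  have hb : 0 < b := by nlinarith [hx.1, hx.2]
  rw [← inv_div x y, ← inv_div a b]
  refine add_inv_le_add_inv_of_mem_Icc (by positivity) ⟨?_, ?_⟩
  · rw [div_le_div_iff₀ hb hy0]; nlinarith [hx.1, hy.2]
  · rw [inv_div, div_le_div_iff₀ hy0 ha]; nlinarith [hx.2, hy.1]

variable {a b : ℝ} {f : ℝ → ℝ}

theorem mul_inv_add_inv_mul_le (ha : 0 < a) (hf_one : ∀ x ∈ Set.Icc a b, f x * f (1 / x) ≤ 1)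
    (hf_maps : Set.MapsTo f (Set.Icc a b) (Set.Icc a b) ∨
      Set.MapsTo f (Set.Icc a b) (Set.Icc (1 / b) (1 / a)))
    {x y : ℝ} (hx : x ∈ Set.Icc a b) (hy : y ∈ Set.Icc a b) :
    f x * f y⁻¹ + f x⁻¹ * f y ≤ a / b + b / a := by
  have hb : 0 < b := ha.trans_le (hx.1.trans hx.2)
  obtain ⟨s, hs, hmaps⟩ : ∃ s > 0, Set.MapsTo f (Set.Icc a b) (Set.Icc (s * a) (s * b)) := by
    rcases hf_maps with h | h
    · exact ⟨1, one_pos, by simpa using h⟩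
    · refine ⟨(a * b)⁻¹, by positivity, ?_⟩
      convert h using 3 <;> field_simp
  have hpos : ∀ z ∈ Set.Icc a b, 0 < f z := fun z hz => (mul_pos hs ha).trans_le (hmaps hz).1
  have hinv : ∀ z ∈ Set.Icc a b, f z⁻¹ ≤ (f z)⁻¹ := fun z hz => by
    rw [← one_div z, ← one_div, le_div_iff₀' (hpos z hz)]
    exact hf_one z hz
  calc f x * f y⁻¹ + f x⁻¹ * f y ≤ f x * (f y)⁻¹ + (f x)⁻¹ * f y := by
        gcongr
        exacts [(hpos x hx).le, hinv y hy, (hpos y hy).le, hinv x hx]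
    _ = f x / f y + f y / f x := by ring
    _ ≤ a / b + b / a := div_add_div_le_of_mem_Icc ha hs (hmaps hx) (hmaps hy)

theorem kantorovich_kernel_le (ha : 0 < a) (hab : a ≤ b)
    (hf_one : ∀ x ∈ Set.Icc a b, f x * f (1 / x) ≤ 1)
    (hf_maps : Set.MapsTo f (Set.Icc a b) (Set.Icc a b) ∨
      Set.MapsTo f (Set.Icc a b) (Set.Icc (1 / b) (1 / a)))
    {g : ℝ → ℝ} (hg_nonneg : ∀ x ∈ Set.Icc a b, 0 ≤ g x)
    {x y : ℝ} (hx : x ∈ Set.Icc a b) (hy : y ∈ Set.Icc a b) :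
    f x * g x * (f y⁻¹ * g y) + f x⁻¹ * g x * (f y * g y) ≤
      2 * ((a ^ 2 + b ^ 2) / (2 * a * b)) * (g x * g y) := by
  have hK : 2 * ((a ^ 2 + b ^ 2) / (2 * a * b)) = a / b + b / a := by
    have := (ha.trans_le hab).ne'
    field_simp
  rw [hK]
  have := mul_le_mul_of_nonneg_left (mul_inv_add_inv_mul_le ha hf_one hf_maps hx hy)
    (mul_nonneg (hg_nonneg x hx) (hg_nonneg y hy))
  linarith

theorem ContinuousOn.comp_inv_Icc (ha : 0 < a)
    (hf : ContinuousOn f (Set.Icc (1 / b) (1 / a))) :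
    ContinuousOn (fun x => f x⁻¹) (Set.Icc a b) := by
  refine hf.comp (continuousOn_inv₀.mono fun x hx => (ha.trans_le hx.1).ne') fun x hx => ?_
  simp only [Set.mem_Icc, one_div]
  exact ⟨inv_anti₀ (ha.trans_le hx.1) hx.2, inv_anti₀ ha hx.1⟩

open Filter in
theorem exists_polynomial_tendstoUniformlyOn {φ : ℝ → ℝ}
    (hφ : ContinuousOn φ (Set.Icc a b)) :
    ∃ q : ℕ → Polynomial ℝ,
      TendstoUniformlyOn (fun n x => (q n).eval x) φ atTop (Set.Icc a b) := by
  choose q hq using fun n : ℕ =>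
    exists_polynomial_near_of_continuousOn a b φ hφ (1 / (n + 1)) Nat.one_div_pos_of_nat
  refine ⟨q, Metric.tendstoUniformlyOn_iff.2 fun ε hε => ?_⟩
  filter_upwards [tendsto_one_div_add_atTop_nhds_zero_nat.eventually (gt_mem_nhds hε)]
    with n hn x hx
  rw [dist_comm, Real.dist_eq]
  exact (hq n x hx).trans hn

end Scalar

section BilinearIntegral

variable {Ω Ω' 𝕜 E F G : Type*} [MeasurableSpace Ω] [MeasurableSpace Ω'] {μ : Measure Ω}
  {ν : Measure Ω'} [RCLike 𝕜] [NormedAddCommGroup E] [NormedSpace 𝕜 E]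
  [NormedAddCommGroup F] [NormedSpace 𝕜 F] [NormedSpace ℝ F] [CompleteSpace F]
  [NormedAddCommGroup G] [NormedSpace 𝕜 G] [NormedSpace ℝ G] [CompleteSpace G]
  {X : Ω → E} {Y : Ω' → F}

theorem ContinuousLinearMap.integral_integral_apply [NormedSpace ℝ E] [CompleteSpace E]
    (B : E →L[𝕜] F →L[𝕜] G)
    (hX : Integrable X μ) (hY : Integrable Y ν) :
    ∫ s, ∫ t, B (X s) (Y t) ∂ν ∂μ = B (∫ s, X s ∂μ) (∫ t, Y t ∂ν) := by
  simp_rw [(B _).integral_comp_comm hY]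
  exact (B.flip _).integral_comp_comm hX

theorem ContinuousLinearMap.integrable_integral_apply (B : E →L[𝕜] F →L[𝕜] G)
    (hX : Integrable X μ) (hY : Integrable Y ν) :
    Integrable (fun s => ∫ t, B (X s) (Y t) ∂ν) μ := by
  simp_rw [(B _).integral_comp_comm hY]
  exact (B.flip _).integrable_comp hX

end BilinearIntegral

/- The Frobenius topology is not reducibly the product topology that `Matrix` carries by default,
so instance search does not find the `ContinuousENorm` that `Integrable` needs. -/
noncomputable instance Matrix.instContinuousENormFrobenius {m n : Type*} [Fintype m] [Fintype n] :
    ContinuousENorm (Matrix m n ℂ) :=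
  SeminormedAddGroup.toContinuousENorm

namespace Matrix

section Integral

variable {Ω Ω' : Type*} [MeasurableSpace Ω] [MeasurableSpace Ω'] {μ : Measure Ω} {ν : Measure Ω'}
  {l m n p : Type*} [Fintype l] [Fintype m] [Fintype n] [Fintype p]

theorem isClosed_setOf_posSemidef : IsClosed {X : Matrix n n ℂ | X.PosSemidef} := by
  simp only [posSemidef_iff_dotProduct_mulVec, Set.ofPred_and, Set.ofPred_forall]
  exact (isClosed_eq continuous_id.matrix_conjTranspose continuous_id).inter <|
    isClosed_iInter fun v => isClosed_le continuous_const <|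
      continuous_const.dotProduct (continuous_id.matrix_mulVec continuous_const)

theorem PosSemidef.integral {h : Ω → Matrix n n ℂ} (hh : ∀ t, (h t).PosSemidef) :
    (∫ t, h t ∂μ).PosSemidef := by
  rw [← nonneg_iff_posSemidef]
  -- as for `ContinuousENorm`, the `ClosedIciTopology` instance is needed for the Frobenius topology
  refine @integral_nonneg _ _ _ _ _ _ _ _ _ ⟨fun X => ?_⟩ _ fun t => (hh t).nonneg
  exact isClosed_setOf_posSemidef.preimage (continuous_id.sub continuous_const)

noncomputable def kroneckerCLM :
    Matrix l m ℂ →L[ℂ] Matrix n p ℂ →L[ℂ] Matrix (l × n) (m × p) ℂ :=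
  LinearMap.toContinuousLinearMap
    ((LinearMap.toContinuousLinearMap : _ ≃ₗ[ℂ] _).toLinearMap ∘ₗ
      kroneckerBilinear (R := ℂ) (α := ℂ))

theorem _root_.MeasureTheory.Integrable.const_kronecker (X : Matrix l m ℂ)
    {Y : Ω' → Matrix n p ℂ} (hY : Integrable Y ν) : Integrable (fun t => X ⊗ₖ Y t) ν :=
  (kroneckerCLM X).integrable_comp hY

theorem _root_.MeasureTheory.Integrable.integral_kronecker {X : Ω → Matrix l m ℂ}
    {Y : Ω' → Matrix n p ℂ} (hX : Integrable X μ) (hY : Integrable Y ν) :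
    Integrable (fun s => ∫ t, X s ⊗ₖ Y t ∂ν) μ :=
  kroneckerCLM.integrable_integral_apply hX hY

theorem integral_integral_kronecker {X : Ω → Matrix l m ℂ} {Y : Ω' → Matrix n p ℂ}
    (hX : Integrable X μ) (hY : Integrable Y ν) :
    ∫ s, ∫ t, X s ⊗ₖ Y t ∂ν ∂μ = (∫ s, X s ∂μ) ⊗ₖ (∫ t, Y t ∂ν) :=
  kroneckerCLM.integral_integral_apply hX hY

theorem posSemidef_sum_smul_integral_kronecker_integral {ι : Type*} [Fintype ι] (c : ι → ℝ)
    {X : ι → Ω → Matrix m m ℂ} {Y : ι → Ω' → Matrix n n ℂ}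
    (hX : ∀ i, Integrable (X i) μ) (hY : ∀ i, Integrable (Y i) ν)
    (h : ∀ s t, (∑ i, c i • (X i s ⊗ₖ Y i t)).PosSemidef) :
    (∑ i, c i • ((∫ s, X i s ∂μ) ⊗ₖ ∫ t, Y i t ∂ν)).PosSemidef := by
  have hsum : ∫ s, ∫ t, ∑ i, c i • (X i s ⊗ₖ Y i t) ∂ν ∂μ =
      ∑ i, c i • ((∫ s, X i s ∂μ) ⊗ₖ ∫ t, Y i t ∂ν) := calc
    _ = ∫ s, ∑ i, c i • ∫ t, X i s ⊗ₖ Y i t ∂ν ∂μ := by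
      refine integral_congr_ae (ae_of_all _ fun s => ?_)
      beta_reduce
      rw [integral_finsetSum _ fun i _ => ?_]
      · simp only [integral_smul]
      · exact ((hY i).const_kronecker (X i s)).smul (c i)
    _ = _ := by
      rw [integral_finsetSum _ fun i _ => ?_]
      · simp only [integral_smul, integral_integral_kronecker (hX _) (hY _)]
      · exact ((hX i).integral_kronecker (hY i)).smul (c i)
  rw [← hsum]
  exact PosSemidef.integral fun s => PosSemidef.integral fun t => h s t

end Integral

section Spectral

variable {m n : Type*} [Fintype m] [DecidableEq m] [Fintype n] [DecidableEq n]
  {X : Matrix m m ℂ} {Y : Matrix n n ℂ}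

theorem IsHermitian.spectrum_subset_Icc (hX : X.IsHermitian) {a b : ℝ} (ha : (X - a • 1).PosSemidef)
    (hb : (b • 1 - X).PosSemidef) : spectrum ℝ X ⊆ Set.Icc a b := by
  rw [← Algebra.algebraMap_eq_smul_one] at ha hb
  exact fun x hx => ⟨(algebraMap_le_iff_le_spectrum (a := X) hX.isSelfAdjoint).1 ha x hx,
    (le_algebraMap_iff_spectrum_le (a := X) hX.isSelfAdjoint).1 hb x hx⟩

theorem IsHermitian.cfc_nonsing_inv (hX : X.IsHermitian) (h0 : 0 ∉ spectrum ℝ X) (φ : ℝ → ℝ) :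
    cfc φ X⁻¹ = cfc (fun x => φ x⁻¹) X := by
  obtain ⟨u, rfl⟩ := (spectrum.zero_notMem_iff ℝ).1 h0
  rw [← coe_units_inv]
  exact (cfc_comp_inv φ u (finite_real_spectrum.image _ |>.continuousOn _) hX.isSelfAdjoint).symm

theorem IsHermitian.cfc_eq_mul_diagonal_mul_conjTranspose (hX : X.IsHermitian) (φ : ℝ → ℝ) :
    cfc φ X = (hX.eigenvectorUnitary : Matrix m m ℂ) *
      diagonal (fun i => (φ (hX.eigenvalues i) : ℂ)) * (hX.eigenvectorUnitary : Matrix m m ℂ)ᴴ := by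
  rw [hX.cfc_eq, IsHermitian.cfc, Unitary.conjStarAlgAut_apply, star_eq_conjTranspose]
  rfl

theorem IsHermitian.cfc_kronecker_cfc (hX : X.IsHermitian) (hY : Y.IsHermitian) (φ ψ : ℝ → ℝ) :
    cfc φ X ⊗ₖ cfc ψ Y =
      ((hX.eigenvectorUnitary : Matrix m m ℂ) ⊗ₖ (hY.eigenvectorUnitary : Matrix n n ℂ)) *
        diagonal (fun p => ((φ (hX.eigenvalues p.1) * ψ (hY.eigenvalues p.2) : ℝ) : ℂ)) *
        ((hX.eigenvectorUnitary : Matrix m m ℂ) ⊗ₖ (hY.eigenvectorUnitary : Matrix n n ℂ))ᴴ := by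
  rw [hX.cfc_eq_mul_diagonal_mul_conjTranspose, hY.cfc_eq_mul_diagonal_mul_conjTranspose,
    mul_kronecker_mul, mul_kronecker_mul, diagonal_kronecker_diagonal, conjTranspose_kronecker]
  simp only [Complex.ofReal_mul]

theorem IsHermitian.norm_cfc_apply_le (hX : X.IsHermitian) {φ : ℝ → ℝ} {C : ℝ}
    (hC : ∀ x ∈ spectrum ℝ X, |φ x| ≤ C) (i j : m) :
    ‖cfc φ X i j‖ ≤ Fintype.card m * C := by
  set U : Matrix m m ℂ := (hX.eigenvectorUnitary : Matrix m m ℂ)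
  have hU : U ∈ unitaryGroup m ℂ := hX.eigenvectorUnitary.2
  rw [hX.cfc_eq_mul_diagonal_mul_conjTranspose, mul_apply]
  simp_rw [mul_diagonal, conjTranspose_apply]
  calc _ ≤ ∑ l, ‖U i l * (φ (hX.eigenvalues l) : ℂ) * star (U j l)‖ := norm_sum_le _ _
    _ ≤ ∑ _l : m, C := Finset.sum_le_sum fun l _ => by
      rw [norm_mul, norm_mul, norm_star, Complex.norm_real, Real.norm_eq_abs]
      have hφC := hC _ (hX.eigenvalues_mem_spectrum_real l)
      calc _ ≤ 1 * C * 1 := by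
            gcongr
            exacts [by simpa using (abs_nonneg _).trans hφC, entry_norm_bound_of_unitary hU i l,
              entry_norm_bound_of_unitary hU j l]
        _ = C := by ring
    _ = Fintype.card m * C := by simp

theorem cfc_mul_cfc (φ ψ : ℝ → ℝ) :
    cfc φ X * cfc ψ X = cfc (fun x => φ x * ψ x) X :=
  (cfc_mul φ ψ X (finite_real_spectrum.continuousOn _) (finite_real_spectrum.continuousOn _)).symm

theorem sum_smul_mul_diagonal_mul_conjTranspose {ι : Type*} [Fintype ι] (W : Matrix m m ℂ)
    (c : ι → ℝ) (d : ι → m → ℝ) :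
    ∑ i, c i • (W * diagonal (fun p => (d i p : ℂ)) * Wᴴ) =
      W * diagonal (fun p => ((∑ i, c i * d i p : ℝ) : ℂ)) * Wᴴ := by
  have hdiag : ∑ i, c i • diagonal (fun p => (d i p : ℂ)) =
      diagonal (fun p => ((∑ i, c i * d i p : ℝ) : ℂ)) := by
    ext p q
    by_cases hpq : p = q
    · subst hpq; simp [Matrix.sum_apply, Complex.real_smul]
    · simp [Matrix.sum_apply, hpq]
  simp only [← hdiag, Finset.mul_sum, Finset.sum_mul, Matrix.mul_smul, Matrix.smul_mul]

theorem posSemidef_sum_smul_cfc_kronecker_cfc {ι : Type*} [Fintype ι] (c : ι → ℝ)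
    (φ ψ : ι → ℝ → ℝ) (hX : X.IsHermitian) (hY : Y.IsHermitian)
    (h : ∀ x ∈ spectrum ℝ X, ∀ y ∈ spectrum ℝ Y, 0 ≤ ∑ i, c i * (φ i x * ψ i y)) :
    (∑ i, c i • (cfc (φ i) X ⊗ₖ cfc (ψ i) Y)).PosSemidef := by
  simp only [hX.cfc_kronecker_cfc hY, sum_smul_mul_diagonal_mul_conjTranspose]
  refine PosSemidef.mul_mul_conjTranspose_same (posSemidef_diagonal_iff.2 fun p => ?_) _
  exact Complex.zero_le_real.2 <|
    h _ (hX.eigenvalues_mem_spectrum_real p.1) _ (hY.eigenvalues_mem_spectrum_real p.2)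

end Spectral

section Measurability

variable {Ω : Type*} [MeasurableSpace Ω] {μ : Measure Ω} {m n : Type*} [Fintype m] [Fintype n]

theorem _root_.MeasureTheory.Integrable.of_norm_apply_le [IsFiniteMeasure μ]
    {f : Ω → Matrix m n ℂ} (hf : AEStronglyMeasurable f μ) {C : ℝ}
    (hC : ∀ t i j, ‖f t i j‖ ≤ C) : Integrable f μ := by
  let e : Matrix m n ℂ ≃L[ℂ] (m → n → ℂ) := (ofLinearEquiv ℂ).symm.toContinuousLinearEquiv
  have he : Integrable (fun t => e (f t)) μ :=
    .of_bound (e.continuous.comp_aestronglyMeasurable hf) (max C 0) <| ae_of_all _ fun t =>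
      pi_norm_le_iff_of_nonneg (le_max_right _ _) |>.2 fun i =>
        pi_norm_le_iff_of_nonneg (le_max_right _ _) |>.2 fun j =>
          (hC t i j).trans (le_max_left _ _)
  exact e.symm.toContinuousLinearMap.integrable_comp he

variable [DecidableEq n] {A : Ω → Matrix n n ℂ} {a b : ℝ} {φ : ℝ → ℝ}

/- Polynomial calculus is continuous in the matrix, and converges to `cfc φ` by uniform
approximation of `φ` on the spectrum. -/
open Filter in
theorem aestronglyMeasurable_cfc (hA : AEStronglyMeasurable A μ) (hAh : ∀ t, (A t).IsHermitian)
    (hspec : ∀ t, spectrum ℝ (A t) ⊆ Set.Icc a b) (hφ : ContinuousOn φ (Set.Icc a b)) :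
    AEStronglyMeasurable (fun t => cfc φ (A t)) μ := by
  have : TopologicalSpace.PseudoMetrizableSpace (Matrix n n ℂ) :=
    inferInstanceAs (TopologicalSpace.PseudoMetrizableSpace (n → n → ℂ))
  obtain ⟨q, hq⟩ := exists_polynomial_tendstoUniformlyOn hφ
  refine aestronglyMeasurable_of_tendsto_ae atTop
    (fun k => (q k).continuous_aeval.comp_aestronglyMeasurable hA) (ae_of_all _ fun t => ?_)
  simp_rw [← cfc_polynomial (q _) (A t) (hAh t)]
  exact tendsto_cfc_fun (hq.mono (hspec t)) (Eventually.of_forall fun k => (q k).continuousOn)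

theorem integrable_cfc [IsFiniteMeasure μ] (hA : AEStronglyMeasurable A μ)
    (hAh : ∀ t, (A t).IsHermitian) (hspec : ∀ t, spectrum ℝ (A t) ⊆ Set.Icc a b)
    (hφ : ContinuousOn φ (Set.Icc a b)) : Integrable (fun t => cfc φ (A t)) μ := by
  obtain ⟨C, hC⟩ := isCompact_Icc.exists_bound_of_continuousOn hφ
  exact .of_norm_apply_le (aestronglyMeasurable_cfc hA hAh hspec hφ) fun t =>
    (hAh t).norm_cfc_apply_le fun x hx => hC x (hspec t hx)

end Measurability

theorem posSemidef_sum_smul_integral_cfc_kronecker_integral_cfc {Ω Ω' : Type*}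
    [MeasurableSpace Ω] [MeasurableSpace Ω'] {μ : Measure Ω} {ν : Measure Ω'}
    [IsFiniteMeasure μ] [IsFiniteMeasure ν] {m n : Type*} [Fintype m] [DecidableEq m] [Fintype n]
    [DecidableEq n] {ι : Type*} [Fintype ι] (c : ι → ℝ) {φ ψ : ι → ℝ → ℝ}
    {A : Ω → Matrix m m ℂ} {B : Ω' → Matrix n n ℂ} {a b a' b' : ℝ}
    (hAm : AEStronglyMeasurable A μ) (hAh : ∀ s, (A s).IsHermitian)
    (hA : ∀ s, spectrum ℝ (A s) ⊆ Set.Icc a b) (hBm : AEStronglyMeasurable B ν)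
    (hBh : ∀ t, (B t).IsHermitian) (hB : ∀ t, spectrum ℝ (B t) ⊆ Set.Icc a' b')
    (hφ : ∀ i, ContinuousOn (φ i) (Set.Icc a b)) (hψ : ∀ i, ContinuousOn (ψ i) (Set.Icc a' b'))
    (h : ∀ x ∈ Set.Icc a b, ∀ y ∈ Set.Icc a' b', 0 ≤ ∑ i, c i * (φ i x * ψ i y)) :
    (∑ i, c i • ((∫ s, cfc (φ i) (A s) ∂μ) ⊗ₖ ∫ t, cfc (ψ i) (B t) ∂ν)).PosSemidef :=
  posSemidef_sum_smul_integral_kronecker_integral c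
    (fun i => integrable_cfc hAm hAh hA (hφ i)) (fun i => integrable_cfc hBm hBh hB (hψ i))
    fun s t => posSemidef_sum_smul_cfc_kronecker_cfc c φ ψ (hAh s) (hBh t)
      fun x hx y hy => h x (hA s hx) y (hB t hy)

end Matrix

/-- Corollary 5.2: for `f` as in Theorem 5.1 and a continuous nonnegative `g` on `[a,b]`,
`(∫ f(A_t) g(A_t) dμ) ⊗ₛ (∫ f(A_t⁻¹) g(A_t) dμ) ≤ ((a²+b²)/(2ab)) (∫ g(A_t) dμ)^{⊗2}`. -/
theorem kantorovich_integral_tensor_f_g {k : ℕ} {Ω : Type*} [MeasurableSpace Ω]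
    (μ : Measure Ω) [IsFiniteMeasure μ] (a b : ℝ) (ha : 0 < a) (hab : a ≤ b)
    (A : Ω → Matrix (Fin k) (Fin k) ℂ) (hAmeas : AEStronglyMeasurable A μ)
    (hAherm : ∀ t, (A t).IsHermitian)
    (hAa : ∀ t, (A t - a • 1).PosSemidef)
    (hAb : ∀ t, ((b • 1 : Matrix (Fin k) (Fin k) ℂ) - A t).PosSemidef)
    (f : ℝ → ℝ)
    (hf_cont : ContinuousOn f (Set.Icc a b ∪ Set.Icc (1 / b) (1 / a)))
    (hf_one : ∀ x ∈ Set.Icc a b, f x * f (1 / x) ≤ 1)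
    (hf_maps : Set.MapsTo f (Set.Icc a b) (Set.Icc a b) ∨
      Set.MapsTo f (Set.Icc a b) (Set.Icc (1 / b) (1 / a)))
    (g : ℝ → ℝ) (hg_cont : ContinuousOn g (Set.Icc a b))
    (hg_nonneg : ∀ x ∈ Set.Icc a b, 0 ≤ g x) :
    (((a ^ 2 + b ^ 2) / (2 * a * b)) • ((∫ t, cfc g (A t) ∂μ) ⊗ₖ (∫ t, cfc g (A t) ∂μ))
      - symKron (∫ t, cfc f (A t) * cfc g (A t) ∂μ)
          (∫ t, cfc f ((A t)⁻¹) * cfc g (A t) ∂μ)).PosSemidef := by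
  have hspec : ∀ t, spectrum ℝ (A t) ⊆ Set.Icc a b := fun t =>
    (hAherm t).spectrum_subset_Icc (hAa t) (hAb t)
  have h0 : ∀ t, 0 ∉ spectrum ℝ (A t) := fun t h0 => not_le.2 ha (hspec t h0).1
  have hF : ContinuousOn (fun x => f x * g x) (Set.Icc a b) :=
    (hf_cont.mono Set.subset_union_left).mul hg_cont
  have hH : ContinuousOn (fun x => f x⁻¹ * g x) (Set.Icc a b) :=
    ((hf_cont.mono Set.subset_union_right).comp_inv_Icc ha).mul hg_cont
  have key := posSemidef_sum_smul_integral_cfc_kronecker_integral_cfc (μ := μ) (ν := μ)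
    ![(a ^ 2 + b ^ 2) / (2 * a * b), -1 / 2, -1 / 2]
    (φ := ![g, fun x => f x * g x, fun x => f x⁻¹ * g x])
    (ψ := ![g, fun x => f x⁻¹ * g x, fun x => f x * g x])
    hAmeas hAherm hspec hAmeas hAherm hspec
    (by simp [Fin.forall_fin_succ, hg_cont, hF, hH]) (by simp [Fin.forall_fin_succ, hg_cont, hF, hH])
    fun x hx y hy => by
      simp only [Fin.sum_univ_three, cons_val]
      linarith [kantorovich_kernel_le ha hab hf_one hf_maps hg_nonneg hx hy]
  simp only [fun t => (hAherm t).cfc_nonsing_inv (h0 t), cfc_mul_cfc, symKron]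
  convert key using 1
  simp only [Fin.sum_univ_three, cons_val_zero, cons_val_one, cons_val]
  module
end
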